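/- Let ψ : ℝ → ℝ be 2π-periodic and twice continuously differentiable, let c ∈ ℝ and x₀ ∈ ℝ, and let s be the 2π-periodic sawtooth function with s(x) = (π − x)/2 for x ∈ (0, 2π). Define v := ψ + c·s(· − x₀), a piecewise smooth 2π-periodic function whose only jump (modulo 2π) is at x₀ with jump amplitude [v](x₀) := v(x₀+) − v(x₀−) = cπ. Let v̂_k := (1/2π)∫_0^{2π} v(y) e^{−iky} dy and define the first-order concentration kernel value K_N v(x) := (π/N) Σ_{0<|k|≤N} i k v̂_k e^{ikx}. Then, as N → ∞: (i) K_N v(x₀) → [v](x₀) = cπ, and (ii) for every x with x − x₀ ∉ 2πℤ, K_N v(x) → 0. -/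

import Mathlib

open MeasureTheory intervalIntegral Filter

/-- The `2π`-periodic sawtooth function with `s(x) = (π − x)/2` on `(0, 2π)`. -/
noncomputable def sawtooth (x : ℝ) : ℝ :=
  (Real.pi - (2 * Real.pi) * Int.fract (x / (2 * Real.pi))) / 2

/-- The `k`-th Fourier coefficient `v̂_k = (1/2π)∫_0^{2π} v(y)e^{−iky} dy` of a
real-valued function. -/
noncomputable def fourierCoefR (v : ℝ → ℝ) (k : ℤ) : ℂ :=
  (1 / (2 * Real.pi)) *
    ∫ y in (0 : ℝ)..(2 * Real.pi), (v y : ℂ) * Complex.exp (-Complex.I * k * y)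

/-- The first-order (Fejér-type, `η ≡ 1`) concentration kernel
`K_N v(x) = (π/N) Σ_{0<|k|≤N} i k v̂_k e^{ikx}` (the `k = 0` term vanishes). -/
noncomputable def concKernel (N : ℕ) (v : ℝ → ℝ) (x : ℝ) : ℂ :=
  ((Real.pi : ℂ) / N) *
    ∑ k ∈ Finset.Icc (-(N : ℤ)) (N : ℤ),
      Complex.I * k * fourierCoefR v k * Complex.exp (Complex.I * k * x)

/-!
The sawtooth has Fourier coefficients `ŝ_k = 1/(2ik)`, so the kernel terms of `c·s(· − x₀)` are
`(c/2)·e^{ik(x−x₀)}`. Their sum over `0 < |k| ≤ N` is `cN` at `x₀`, and stays bounded elsewhere,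
being a pair of geometric sums `Σ z^k` with `|z| = 1 ≠ z`; after the factor `π/N` this gives `cπ`
and `0`. For the `C²` part, two integrations by parts give `|ik ψ̂_k| ≤ C/|k|`, so its kernel is `π`
times a Cesàro mean of a null sequence.
-/

open Complex
open scoped Real Interval

lemma Function.Periodic.deriv {𝕜 F : Type*} [NontriviallyNormedField 𝕜] [NormedAddCommGroup F]
    [NormedSpace 𝕜 F] {f : 𝕜 → F} {T : 𝕜} (hf : Function.Periodic f T) :
    Function.Periodic (deriv f) T := fun x => by
  rw [← deriv_comp_add_const, funext hf]

lemma Finset.sum_Icc_neg_eq_add_sum_range {M : Type*} [AddCommMonoid M] (g : ℤ → M) (N : ℕ) :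
    ∑ k ∈ Finset.Icc (-(N : ℤ)) N, g k
      = g 0 + ∑ j ∈ Finset.range N, (g ((j : ℤ) + 1) + g (-((j : ℤ) + 1))) := by
  induction N with
  | zero => simp
  | succ n ih =>
    have hIcc : Finset.Icc (-((n + 1 : ℕ) : ℤ)) ((n + 1 : ℕ) : ℤ)
        = insert ((n : ℤ) + 1) (insert (-((n : ℤ) + 1)) (Finset.Icc (-(n : ℤ)) n)) := by
      ext m
      simp only [Finset.mem_Icc, Finset.mem_insert]
      omega
    rw [hIcc, Finset.sum_insert (by simp; omega), Finset.sum_insert (by simp), ih,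
      Finset.sum_range_succ]
    abel

lemma norm_sum_range_pow_succ_le {𝕜 : Type*} [NormedDivisionRing 𝕜] {z : 𝕜} (hz : ‖z‖ = 1)
    (hz1 : z ≠ 1) (N : ℕ) :
    ‖∑ j ∈ Finset.range N, z ^ (j + 1)‖ ≤ 2 / ‖z - 1‖ := by
  have hsum : ∑ j ∈ Finset.range N, z ^ (j + 1) = z * ((z ^ N - 1) / (z - 1)) := by
    simp only [pow_succ', ← Finset.mul_sum, geom_sum_eq hz1]
  have hnum : ‖z ^ N - 1‖ ≤ 2 := by
    calc ‖z ^ N - 1‖ ≤ ‖z ^ N‖ + ‖(1 : 𝕜)‖ := norm_sub_le _ _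
      _ = 2 := by rw [norm_pow, hz]; norm_num
  rw [hsum, norm_mul, hz, one_mul, norm_div]
  exact div_le_div_of_nonneg_right hnum (norm_nonneg _)

lemma tendsto_cesaro_pow_succ {z : ℂ} (hz : ‖z‖ = 1) (hz1 : z ≠ 1) :
    Tendsto (fun N : ℕ => (N : ℝ)⁻¹ • ∑ j ∈ Finset.range N, z ^ (j + 1)) atTop (nhds 0) := by
  refine squeeze_zero_norm (fun N => ?_) (tendsto_const_div_atTop_nhds_zero_nat (2 / ‖z - 1‖))
  rw [norm_smul, Real.norm_eq_abs, abs_inv, Nat.abs_cast, inv_mul_eq_div]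
  exact div_le_div_of_nonneg_right (norm_sum_range_pow_succ_le hz hz1 N) (Nat.cast_nonneg N)

lemma fourierCoeffOn_const {a b : ℝ} (hab : a < b) (c : ℂ) {n : ℤ} (hn : n ≠ 0) :
    fourierCoeffOn hab (fun _ => c) n = 0 := by
  rw [fourierCoeffOn_of_hasDerivAt hab hn (fun x _ => hasDerivAt_const x c)
    intervalIntegrable_const]
  simp [fourierCoeffOn_eq_integral]

lemma sawtooth_periodic : Function.Periodic sawtooth (2 * π) := by
  intro x
  rw [sawtooth, sawtooth, add_div, div_self Real.two_pi_pos.ne', Int.fract_add_one]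

lemma sawtooth_eq_of_mem_Ioo {y : ℝ} (hy : y ∈ Set.Ioo 0 (2 * π)) : sawtooth y = (π - y) / 2 := by
  have hfract : Int.fract (y / (2 * π)) = y / (2 * π) :=
    Int.fract_eq_self.2 ⟨by have := hy.1; positivity, (div_lt_one Real.two_pi_pos).2 hy.2⟩
  rw [sawtooth, hfract]
  field_simp

lemma abs_sawtooth_le (x : ℝ) : |sawtooth x| ≤ π / 2 := by
  have h0 := Int.fract_nonneg (x / (2 * π))
  have h1 := Int.fract_lt_one (x / (2 * π))
  rw [sawtooth, abs_le]
  constructor <;> nlinarith [Real.pi_pos]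

lemma intervalIntegrable_sawtooth_sub (x₀ a b : ℝ) :
    IntervalIntegrable (fun y => sawtooth (y - x₀)) volume a b := by
  have hmeas : Measurable fun y => sawtooth (y - x₀) := by unfold sawtooth; fun_prop
  refine (intervalIntegrable_const (c := π / 2)).mono_fun hmeas.aestronglyMeasurable
    (ae_of_all _ fun y => ?_)
  simpa [abs_of_pos Real.pi_pos] using abs_sawtooth_le (y - x₀)

lemma fourierCoefR_eq_fourierCoeffOn (v : ℝ → ℝ) (k : ℤ) :
    fourierCoefR v k = fourierCoeffOn Real.two_pi_pos (fun y => (v y : ℂ)) k := by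
  rw [fourierCoeffOn_eq_integral, fourierCoefR, sub_zero, real_smul]
  push_cast
  congr 1
  refine integral_congr fun y _ => ?_
  rw [fourier_coe_apply, smul_eq_mul, mul_comm]
  congr 2
  push_cast
  field_simp

lemma fourierCoefR_deriv {f : ℝ → ℝ} (hper : Function.Periodic f (2 * π))
    (hf : ContDiff ℝ 1 f) {k : ℤ} (hk : k ≠ 0) :
    fourierCoefR (deriv f) k = I * k * fourierCoefR f k := by
  have hderiv : ∀ y, HasDerivAt (fun y => (f y : ℂ)) ((deriv f y : ℝ) : ℂ) y :=
    fun y => (hf.differentiable one_ne_zero y).hasDerivAt.ofReal_comp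
  have hcont : Continuous fun y => ((deriv f y : ℝ) : ℂ) :=
    continuous_ofReal.comp (hf.continuous_deriv le_rfl)
  have hperiod : f (2 * π) = f 0 := by simpa using hper 0
  rw [fourierCoefR_eq_fourierCoeffOn, fourierCoefR_eq_fourierCoeffOn,
    fourierCoeffOn_of_hasDerivAt Real.two_pi_pos hk (fun y _ => hderiv y)
      (hcont.intervalIntegrable _ _), hperiod]
  have hk' : (k : ℂ) ≠ 0 := by exact_mod_cast hk
  simp only [sub_self, mul_zero, zero_sub]
  field_simp
  push_cast
  ring

lemma fourierCoefR_congr_Ioo {f g : ℝ → ℝ} (hfg : Set.EqOn f g (Set.Ioo 0 (2 * π))) (k : ℤ) :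
    fourierCoefR f k = fourierCoefR g k := by
  unfold fourierCoefR
  simp only [integral_of_le Real.two_pi_pos.le, integral_Ioc_eq_integral_Ioo]
  congr 1
  exact setIntegral_congr_fun measurableSet_Ioo fun y hy => by rw [hfg hy]

lemma fourierCoefR_add_mul {f g : ℝ → ℝ} (hf : IntervalIntegrable f volume 0 (2 * π))
    (hg : IntervalIntegrable g volume 0 (2 * π)) (c : ℝ) (k : ℤ) :
    fourierCoefR (fun y => f y + c * g y) k = fourierCoefR f k + c * fourierCoefR g k := by
  have hexp : ContinuousOn (fun y : ℝ => exp (-I * k * y)) [[0, 2 * π]] := by fun_prop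
  have hf' := IntervalIntegrable.mul_continuousOn ⟨hf.1.ofReal, hf.2.ofReal⟩ hexp
  have hg' := (IntervalIntegrable.mul_continuousOn ⟨hg.1.ofReal, hg.2.ofReal⟩ hexp).const_mul
    (c : ℂ)
  have hint : ∫ y in (0 : ℝ)..2 * π, ((f y + c * g y : ℝ) : ℂ) * exp (-I * k * y)
      = (∫ y in (0 : ℝ)..2 * π, (f y : ℂ) * exp (-I * k * y))
        + c * ∫ y in (0 : ℝ)..2 * π, (g y : ℂ) * exp (-I * k * y) := by
    rw [← intervalIntegral.integral_const_mul]
    exact (integral_congr fun y _ => by push_cast; ring).trans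
      (intervalIntegral.integral_add hf' hg')
  simp only [fourierCoefR, hint]
  ring

lemma norm_fourierCoefR_le {g : ℝ → ℝ} {C : ℝ} (hC : ∀ y ∈ Ι (0 : ℝ) (2 * π), |g y| ≤ C)
    (k : ℤ) : ‖fourierCoefR g k‖ ≤ C := by
  have hint : ‖∫ y in (0 : ℝ)..2 * π, (g y : ℂ) * exp (-I * k * y)‖ ≤ C * |2 * π - 0| :=
    norm_integral_le_of_norm_le_const fun y hy => by
      simpa [norm_exp] using hC y hy
  have hnorm : ‖(1 / (2 * π) : ℂ)‖ = 1 / (2 * π) := by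
    rw [← ofReal_ofNat, ← ofReal_mul, ← ofReal_one, ← ofReal_div, norm_real, Real.norm_eq_abs,
      abs_of_pos (by positivity)]
  rw [sub_zero, abs_of_pos Real.two_pi_pos] at hint
  rw [fourierCoefR, norm_mul, hnorm]
  calc 1 / (2 * π) * _ ≤ 1 / (2 * π) * (C * (2 * π)) := by gcongr
    _ = C := by field_simp

lemma exp_neg_I_mul_int_mul_two_pi (k : ℤ) : exp (-I * k * (2 * π : ℝ)) = 1 := by
  rw [show -I * k * ((2 * π : ℝ) : ℂ) = (-k : ℤ) * (2 * π * I) by push_cast; ring,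
    exp_int_mul_two_pi_mul_I]

lemma fourierCoefR_comp_sub {v : ℝ → ℝ} (hper : Function.Periodic v (2 * π)) (x₀ : ℝ) (k : ℤ) :
    fourierCoefR (fun y => v (y - x₀)) k = exp (-I * k * x₀) * fourierCoefR v k := by
  set g : ℝ → ℂ := fun y => (v y : ℂ) * exp (-I * k * y)
  have hg : Function.Periodic g (2 * π) := fun y => by
    simp only [g, hper y]
    rw [ofReal_add, mul_add, exp_add, exp_neg_I_mul_int_mul_two_pi, mul_one]
  have hshift : ∀ y : ℝ, (v (y - x₀) : ℂ) * exp (-I * k * y) = exp (-I * k * x₀) * g (y - x₀) := by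
    intro y
    rw [show -I * k * (y : ℂ) = -I * k * ((y - x₀ : ℝ) : ℂ) + -I * k * x₀ by push_cast; ring,
      exp_add]
    ring
  have hint : ∫ y in (0 : ℝ)..2 * π, g (y - x₀) = ∫ y in (0 : ℝ)..2 * π, g y := by
    rw [integral_comp_sub_right g x₀]
    simpa [neg_add_eq_sub] using hg.intervalIntegral_add_eq (-x₀) 0
  simp only [fourierCoefR, hshift, intervalIntegral.integral_const_mul, hint]
  ring

lemma fourierCoefR_sawtooth {k : ℤ} (hk : k ≠ 0) : fourierCoefR sawtooth k = 1 / (2 * I * k) := by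
  have hderiv : ∀ y, HasDerivAt (fun y : ℝ => (((π - y) / 2 : ℝ) : ℂ)) (((-1 / 2 : ℝ)) : ℂ) y :=
    fun y => (((hasDerivAt_id y).const_sub π).div_const 2).ofReal_comp.congr_deriv (by simp)
  rw [fourierCoefR_congr_Ioo (fun y hy => sawtooth_eq_of_mem_Ioo hy),
    fourierCoefR_eq_fourierCoeffOn,
    fourierCoeffOn_of_hasDerivAt Real.two_pi_pos hk (fun y _ => hderiv y) intervalIntegrable_const,
    fourierCoeffOn_const Real.two_pi_pos _ hk]
  have hk' : (k : ℂ) ≠ 0 := by exact_mod_cast hk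
  rw [QuotientAddGroup.mk_zero, fourier_eval_zero, one_mul, mul_zero, sub_zero]
  push_cast
  field_simp
  ring

lemma exists_norm_I_mul_fourierCoefR_le {f : ℝ → ℝ} (hper : Function.Periodic f (2 * π))
    (hf : ContDiff ℝ 2 f) : ∃ C, ∀ k : ℤ, k ≠ 0 → ‖I * k * fourierCoefR f k‖ ≤ C / |(k : ℝ)| := by
  have hf₁ : ContDiff ℝ 1 f := hf.of_le one_le_two
  have hf' : ContDiff ℝ 1 (deriv f) := hf.deriv'
  obtain ⟨C, hC⟩ := (isCompact_Icc (a := 0) (b := 2 * π)).exists_bound_of_continuousOn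
    (hf'.continuous_deriv le_rfl).continuousOn
  refine ⟨C, fun k hk => ?_⟩
  have hsecond : ‖fourierCoefR (deriv (deriv f)) k‖ ≤ C :=
    norm_fourierCoefR_le (fun y hy => hC y (Set.Ioc_subset_Icc_self
      (by rwa [Set.uIoc_of_le Real.two_pi_pos.le] at hy))) k
  rw [fourierCoefR_deriv hper.deriv hf' hk, norm_mul, norm_mul, norm_I, one_mul,
    norm_intCast] at hsecond
  rw [← fourierCoefR_deriv hper hf₁ hk, le_div_iff₀ (abs_pos.2 (Int.cast_ne_zero.2 hk)), mul_comm]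
  exact hsecond

noncomputable def concKernelTerm (v : ℝ → ℝ) (x : ℝ) (k : ℤ) : ℂ :=
  I * k * fourierCoefR v k * exp (I * k * x)

lemma concKernel_eq_pi_mul_cesaro (N : ℕ) (v : ℝ → ℝ) (x : ℝ) :
    concKernel N v x = π * ((N : ℝ)⁻¹ • ∑ j ∈ Finset.range N,
      (concKernelTerm v x ((j : ℤ) + 1) + concKernelTerm v x (-((j : ℤ) + 1)))) := by
  rw [concKernel, Finset.sum_Icc_neg_eq_add_sum_range, real_smul]
  simp only [concKernelTerm, Int.cast_zero, mul_zero, zero_mul, zero_add]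
  push_cast
  ring

lemma tendsto_concKernel_of_tendsto {v : ℝ → ℝ} {x : ℝ} {L : ℂ}
    (h : Tendsto (fun j : ℕ =>
      concKernelTerm v x ((j : ℤ) + 1) + concKernelTerm v x (-((j : ℤ) + 1))) atTop (nhds L)) :
    Tendsto (fun N => concKernel N v x) atTop (nhds (π * L)) := by
  simp only [concKernel_eq_pi_mul_cesaro]
  exact h.cesaro_smul.const_mul _

lemma concKernel_add_mul {f g : ℝ → ℝ} (hf : IntervalIntegrable f volume 0 (2 * π))
    (hg : IntervalIntegrable g volume 0 (2 * π)) (c : ℝ) (N : ℕ) (x : ℝ) :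
    concKernel N (fun y => f y + c * g y) x = concKernel N f x + c * concKernel N g x := by
  simp only [concKernel, fourierCoefR_add_mul hf hg, Finset.mul_sum, ← Finset.sum_add_distrib]
  exact Finset.sum_congr rfl fun k _ => by ring

lemma tendsto_concKernel_of_contDiff {ψ : ℝ → ℝ} (hper : Function.Periodic ψ (2 * π))
    (hψ : ContDiff ℝ 2 ψ) (x : ℝ) : Tendsto (fun N => concKernel N ψ x) atTop (nhds 0) := by
  obtain ⟨C, hC⟩ := exists_norm_I_mul_fourierCoefR_le hper hψ
  have hterm : ∀ (j : ℕ) (k : ℤ), |(k : ℝ)| = j + 1 → ‖concKernelTerm ψ x k‖ ≤ C / (j + 1) := by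
    intro j k hk
    have hk0 : k ≠ 0 := by
      rintro rfl
      rw [Int.cast_zero, abs_zero] at hk
      linarith
    have hexp : ‖exp (I * k * x)‖ = 1 := by simp [norm_exp]
    rw [concKernelTerm, norm_mul, hexp, mul_one, ← hk]
    exact hC k hk0
  have hpair : ∀ j : ℕ, ‖concKernelTerm ψ x ((j : ℤ) + 1) + concKernelTerm ψ x (-((j : ℤ) + 1))‖
      ≤ 2 * C * (1 / ((j : ℝ) + 1)) := fun j => by
    have h₁ := hterm j ((j : ℤ) + 1) (by push_cast; exact abs_of_pos (by positivity))
    have h₂ := hterm j (-((j : ℤ) + 1))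
      (by push_cast; rw [abs_neg]; exact abs_of_pos (by positivity))
    calc _ ≤ _ := norm_add_le _ _
      _ ≤ C / (j + 1) + C / (j + 1) := add_le_add h₁ h₂
      _ = _ := by ring
  have hlim := squeeze_zero_norm hpair
    (by simpa using tendsto_one_div_add_atTop_nhds_zero_nat.const_mul (2 * C))
  simpa using tendsto_concKernel_of_tendsto hlim

lemma concKernelTerm_sawtooth_sub (x₀ x : ℝ) {k : ℤ} (hk : k ≠ 0) :
    concKernelTerm (fun y => sawtooth (y - x₀)) x k = exp (I * (x - x₀)) ^ k / 2 := by
  have hexp : exp (-I * k * x₀) * exp (I * k * x) = exp (I * (x - x₀)) ^ k := by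
    rw [← exp_add, ← exp_int_mul]
    ring_nf
  have hk' : (k : ℂ) ≠ 0 := Int.cast_ne_zero.2 hk
  rw [concKernelTerm, fourierCoefR_comp_sub sawtooth_periodic, fourierCoefR_sawtooth hk, ← hexp]
  field_simp

lemma tendsto_concKernel_sawtooth_sub_self (x₀ : ℝ) :
    Tendsto (fun N => concKernel N (fun y => sawtooth (y - x₀)) x₀) atTop (nhds π) := by
  have hpair : ∀ j : ℕ, concKernelTerm (fun y => sawtooth (y - x₀)) x₀ ((j : ℤ) + 1)
      + concKernelTerm (fun y => sawtooth (y - x₀)) x₀ (-((j : ℤ) + 1)) = 1 := fun j => by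
    rw [concKernelTerm_sawtooth_sub _ _ (by omega), concKernelTerm_sawtooth_sub _ _ (by omega)]
    simp only [sub_self, mul_zero, exp_zero, one_zpow]
    norm_num
  simpa using tendsto_concKernel_of_tendsto (tendsto_const_nhds.congr fun j => (hpair j).symm)

lemma tendsto_concKernel_sawtooth_sub_of_ne {x₀ x : ℝ} (hx : ∀ m : ℤ, x - x₀ ≠ 2 * π * m) :
    Tendsto (fun N => concKernel N (fun y => sawtooth (y - x₀)) x) atTop (nhds 0) := by
  set z := exp (I * (x - x₀))
  have hz : ‖z‖ = 1 := by simp [z, norm_exp]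
  have hz1 : z ≠ 1 := by
    rw [Ne, exp_eq_one_iff]
    rintro ⟨m, hm⟩
    refine hx m (ofReal_injective ?_)
    push_cast
    linear_combination (-I) * hm + (x - x₀ - 2 * π * m) * I_sq
  have hzinv : ‖z⁻¹‖ = 1 := by rw [norm_inv, hz, inv_one]
  have hpair : ∀ j : ℕ, concKernelTerm (fun y => sawtooth (y - x₀)) x ((j : ℤ) + 1)
      + concKernelTerm (fun y => sawtooth (y - x₀)) x (-((j : ℤ) + 1))
        = (z ^ (j + 1) + z⁻¹ ^ (j + 1)) / 2 := fun j => by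
    have hcast : (j : ℤ) + 1 = ((j + 1 : ℕ) : ℤ) := by push_cast; ring
    rw [concKernelTerm_sawtooth_sub _ _ (by omega), concKernelTerm_sawtooth_sub _ _ (by omega),
      hcast, zpow_neg, zpow_natCast, inv_pow, add_div]
  have hmean := ((tendsto_cesaro_pow_succ hz hz1).add
    (tendsto_cesaro_pow_succ hzinv (inv_ne_one.2 hz1))).div_const 2 |>.const_mul (π : ℂ)
  rw [show (0 : ℂ) = π * ((0 + 0) / 2) by simp]
  refine hmean.congr fun N => ?_
  rw [concKernel_eq_pi_mul_cesaro, Finset.sum_congr rfl fun j _ => hpair j, ← Finset.sum_div,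
    Finset.sum_add_distrib, ← smul_add, smul_div_assoc]

/-- Concentration property of the first-order kernel for a piecewise smooth function
`v = ψ + c·s(· − x₀)` with `ψ` a `2π`-periodic `C²` function and `s` the sawtooth:
(i) at the jump point, `K_N v(x₀) → [v](x₀) = cπ`;
(ii) away from the jump (mod `2π`), `K_N v(x) → 0`. -/
theorem concentration_kernel_detects_edges
    (ψ : ℝ → ℝ) (hψper : Function.Periodic ψ (2 * Real.pi)) (hψ : ContDiff ℝ 2 ψ)
    (c x₀ : ℝ) (v : ℝ → ℝ)
    (hv : ∀ x : ℝ, v x = ψ x + c * sawtooth (x - x₀)) :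
    Tendsto (fun N : ℕ => concKernel N v x₀) atTop (nhds ((c * Real.pi : ℝ) : ℂ)) ∧
    ∀ x : ℝ, (∀ m : ℤ, x - x₀ ≠ 2 * Real.pi * m) →
      Tendsto (fun N : ℕ => concKernel N v x) atTop (nhds 0) := by
  have hsplit : ∀ N x, concKernel N v x
      = concKernel N ψ x + c * concKernel N (fun y => sawtooth (y - x₀)) x := by
    rw [funext hv]
    exact concKernel_add_mul (hψ.continuous.intervalIntegrable _ _)
      (intervalIntegrable_sawtooth_sub x₀ _ _) c
  simp only [hsplit]
  refine ⟨?_, fun x hx => ?_⟩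
  · simpa using (tendsto_concKernel_of_contDiff hψper hψ x₀).add
      ((tendsto_concKernel_sawtooth_sub_self x₀).const_mul (c : ℂ))
  · simpa using (tendsto_concKernel_of_contDiff hψper hψ x).add
      ((tendsto_concKernel_sawtooth_sub_of_ne hx).const_mul (c : ℂ))
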